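/- arXiv:1705.02528 — 3 statements merged into one kernel-verified Lean document; each statement's English description precedes it below -/
import Mathlib

section
/- Let N = p1^{k1} ⋯ pn^{kn} with distinct primes pi and ki ≥ 1. An element x ∈ ℤ/Nℤ is non-nilpotent (in the sense: x ≠ 0 and for every r ∈ ℤ and integer k > 1, r^k • x = 0 implies r • x = 0) if and only if x = m · p1^{k1−1} ⋯ pn^{kn−1} (mod N) for some integer m with 1 ≤ m ≤ p1 ⋯ pn − 1. -/
theorem zmod_nonnilpotent_iff
    (n : ℕ) (hn : 0 < n) (p k : Fin n → ℕ)
    (hp : ∀ i, (p i).Prime) (hinj : Function.Injective p)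
    (hk : ∀ i, 1 ≤ k i) (x : ZMod (∏ i, p i ^ k i)) :
    (x ≠ 0 ∧ ∀ (r : ℤ) (j : ℕ), 1 < j → r ^ j • x = 0 → r • x = 0) ↔
    ∃ m : ℕ, 1 ≤ m ∧ m ≤ (∏ i, p i) - 1 ∧
      x = ((m * ∏ i, p i ^ (k i - 1) : ℕ) : ZMod (∏ i, p i ^ k i)) := by
  have hNpos : 0 < ∏ i, p i ^ k i :=
    Finset.prod_pos fun i _ => pow_pos (hp i).pos _
  revert x
  set N := ∏ i, p i ^ k i with hN
  set P := ∏ i, p i with hP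
  set Q := ∏ i, p i ^ (k i - 1) with hQ
  intro x
  haveI : NeZero N := ⟨hNpos.ne'⟩
  have hQpos : 0 < Q := Finset.prod_pos fun i _ => pow_pos (hp i).pos _
  have hPpos : 0 < P := Finset.prod_pos fun i _ => (hp i).pos
  have hpk : ∀ i, p i ^ k i = p i * p i ^ (k i - 1) := by
    intro i
    rw [← pow_succ']
    congr 1
    have := hk i
    omega
  have hNPQ : N = P * Q := by
    rw [hN, hP, hQ, ← Finset.prod_mul_distrib]
    exact Finset.prod_congr rfl fun i _ => hpk i
  have hcop : ∀ i j : Fin n, i ≠ j → ∀ a b : ℕ, Nat.Coprime (p i ^ a) (p j ^ b) :=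
    fun i j hij a b =>
      Nat.Coprime.pow a b ((Nat.coprime_primes (hp i) (hp j)).mpr (fun h => hij (hinj h)))
  have hNcast : (N : ℤ) = ∏ i, ((p i ^ k i : ℕ) : ℤ) := by rw [hN]; push_cast; rfl
  have hxval : ((x.val : ℤ) : ZMod N) = x := by
    simp [ZMod.natCast_val, ZMod.cast_id]
  have hsmul : ∀ r : ℤ, (r • x = 0 ↔ (N : ℤ) ∣ r * (x.val : ℤ)) := by
    intro r
    conv_lhs => rw [← hxval]
    rw [zsmul_eq_mul, ← Int.cast_mul, ZMod.intCast_zmod_eq_zero_iff_dvd]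
  constructor
  · rintro ⟨hx0, hnil⟩
    have ha0 : x.val ≠ 0 := fun h => hx0 (by rwa [← ZMod.val_eq_zero])
    have haN : x.val < N := ZMod.val_lt x
    have hdvd : ∀ i, p i ^ (k i - 1) ∣ x.val := by
      intro i
      by_contra hnd
      haveI : Fact (p i).Prime := ⟨hp i⟩
      set v := padicValNat (p i) x.val with hv
      have hv1 : ¬ p i ^ (v + 1) ∣ x.val := pow_succ_padicValNat_not_dvd ha0
      have hvk : v + 1 < k i := by
        rcases lt_or_ge v (k i - 1) with h | h
        · have := hk i; omega
        · exact absurd ((pow_dvd_pow (p i) h).trans pow_padicValNat_dvd) hnd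
      set c := k i - 1 - v with hc
      have hc1 : 1 ≤ c := by omega
      set s := ∏ t ∈ Finset.univ.erase i, p t ^ k t with hs
      have hNs : N = p i ^ k i * s := by
        rw [hN, hs]
        exact (Finset.mul_prod_erase _ _ (Finset.mem_univ i)).symm
      have hrj : (N : ℤ) ∣ ((s * p i ^ c : ℕ) : ℤ) ^ (k i + 1) := by
        have hle : k i ≤ c * (k i + 1) := by
          have h1 : k i + 1 ≤ c * (k i + 1) := Nat.le_mul_of_pos_left _ hc1
          omega
        have hnat : N ∣ (s * p i ^ c) ^ (k i + 1) := by
          rw [hNs, mul_pow, mul_comm (p i ^ k i) s, ← pow_mul]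
          exact mul_dvd_mul (dvd_pow_self s (by omega)) (pow_dvd_pow _ hle)
        exact_mod_cast Int.natCast_dvd_natCast.mpr hnat
      have hra := (hsmul _).mp
        (hnil ((s * p i ^ c : ℕ) : ℤ) (k i + 1) (by omega)
          ((hsmul _).mpr (Dvd.dvd.mul_right hrj _)))
      have hra' : N ∣ (s * p i ^ c) * x.val := by exact_mod_cast hra
      have hpkd : p i ^ k i ∣ (s * p i ^ c) * x.val :=
        (hNs ▸ dvd_mul_right _ s).trans hra'
      have hsplit : p i ^ c * p i ^ (v + 1) ∣ p i ^ c * (s * x.val) := by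
        have he : p i ^ c * p i ^ (v + 1) = p i ^ k i := by
          rw [← pow_add]; congr 1; omega
        rw [he]
        refine hpkd.trans (dvd_of_eq ?_)
        ring
      have h2 : p i ^ (v + 1) ∣ s * x.val :=
        (mul_dvd_mul_iff_left (pow_ne_zero c (hp i).pos.ne')).mp hsplit
      have hcops : Nat.Coprime (p i ^ (v + 1)) s :=
        Nat.Coprime.prod_right fun t ht =>
          hcop i t (fun h => (Finset.mem_erase.mp ht).1 h.symm) _ _
      exact hv1 (hcops.dvd_of_dvd_mul_left h2)
    have hQdvd : Q ∣ x.val := by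
      have hint : ((Q : ℕ) : ℤ) ∣ ((x.val : ℕ) : ℤ) := by
        rw [hQ]
        push_cast
        refine Finset.prod_dvd_of_coprime ?_ fun i _ => ?_
        · intro i _ j hj hij
          simp only [Function.onFun]
          exact_mod_cast Nat.isCoprime_iff_coprime.mpr (hcop i j hij _ _)
        · exact_mod_cast Int.natCast_dvd_natCast.mpr (hdvd i)
      exact_mod_cast hint
    obtain ⟨m, hm⟩ := hQdvd
    have hm1 : 1 ≤ m := by
      rcases Nat.eq_zero_or_pos m with h | h
      · exact absurd (hm.trans (by rw [h, mul_zero])) ha0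
      · exact h
    refine ⟨m, hm1, ?_, ?_⟩
    · have hlt : Q * m < P * Q := by rw [← hm, ← hNPQ]; exact haN
      have : m < P := by
        rw [mul_comm Q m] at hlt
        exact lt_of_mul_lt_mul_right hlt (Nat.zero_le Q)
      omega
    · rw [mul_comm m Q, ← hm]
      rw [show ((x.val : ℕ) : ZMod N) = ((x.val : ℤ) : ZMod N) by push_cast; rfl, hxval]
  · rintro ⟨m, hm1, hm2, hxm⟩
    have hmQpos : 0 < m * Q := Nat.mul_pos hm1 hQpos
    have hmQlt : m * Q < N := by
      rw [hNPQ]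
      have hmP : m < P := by omega
      calc m * Q < P * Q := by
            exact Nat.mul_lt_mul_of_lt_of_le hmP le_rfl hQpos
        _ = P * Q := rfl
    have key : ∀ a : ℤ, (a • ((m * Q : ℕ) : ZMod N) = 0 ↔ (N : ℤ) ∣ a * ((m * Q : ℕ) : ℤ)) := by
      intro a
      have hcast : (((a * ((m * Q : ℕ) : ℤ) : ℤ)) : ZMod N) = a • ((m * Q : ℕ) : ZMod N) := by
        rw [Int.cast_mul, Int.cast_natCast, zsmul_eq_mul]
      rw [← ZMod.intCast_zmod_eq_zero_iff_dvd, hcast]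
    constructor
    · rw [hxm]
      intro h
      rw [ZMod.natCast_eq_zero_iff] at h
      have := Nat.le_of_dvd hmQpos h
      omega
    · intro r j hj hrj
      rw [hxm] at hrj ⊢
      rw [key] at hrj
      rw [key]
      rw [hNcast] at hrj ⊢
      refine Finset.prod_dvd_of_coprime ?_ fun i _ => ?_
      · intro i _ j' hj' hij
        simp only [Function.onFun]
        exact_mod_cast Nat.isCoprime_iff_coprime.mpr (hcop i j' hij _ _)
      · have h1 : ((p i ^ k i : ℕ) : ℤ) ∣ r ^ j * ((m * Q : ℕ) : ℤ) :=
          (Finset.dvd_prod_of_mem _ (Finset.mem_univ i)).trans hrj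
        by_cases hdr : ((p i : ℕ) : ℤ) ∣ r
        · have hQd : ((p i ^ (k i - 1) : ℕ) : ℤ) ∣ ((m * Q : ℕ) : ℤ) := by
            refine Int.natCast_dvd_natCast.mpr ?_
            rw [hQ]
            exact ((Finset.dvd_prod_of_mem (fun t => p t ^ (k t - 1))
              (Finset.mem_univ i)).mul_left m)
          calc ((p i ^ k i : ℕ) : ℤ) = (p i : ℕ) * ((p i ^ (k i - 1) : ℕ) : ℤ) := by
                rw [hpk i]; push_cast; ring
            _ ∣ r * ((m * Q : ℕ) : ℤ) := mul_dvd_mul hdr hQd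
        · have hcopr : IsCoprime ((p i : ℕ) : ℤ) r :=
            (Prime.coprime_iff_not_dvd (Nat.prime_iff_prime_int.mp (hp i))).mpr hdr
          have hcoppow : IsCoprime (((p i ^ k i : ℕ)) : ℤ) (r ^ j) := by
            have hpow := hcopr.pow (m := k i) (n := j)
            rwa [show (((p i ^ k i : ℕ)) : ℤ) = ((p i : ℕ) : ℤ) ^ k i by push_cast; ring]
          exact (hcoppow.dvd_of_dvd_mul_left h1).mul_left r
end

section
/- Let N = p1^{k1} ⋯ pn^{kn} with distinct primes pi, ki ≥ 1. The number of non-nilpotent elements of the ℤ-module ℤ/Nℤ is p1 p2 ⋯ pn − 1; in particular, it depends only on the primes pi and not on the exponents ki. -/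
private lemma squarefree_prod_primes {ι : Type*} (s : Finset ι) (p : ι → ℕ)
    (hp : ∀ i ∈ s, (p i).Prime) (hinj : Set.InjOn p s) :
    Squarefree (∏ i ∈ s, p i) := by
  classical
  induction s using Finset.induction with
  | empty => simp only [Finset.prod_empty]; exact squarefree_one
  | @insert a s' ha ih =>
    rw [Finset.prod_insert ha]
    have hco : Nat.Coprime (p a) (∏ i ∈ s', p i) := by
      refine Nat.Coprime.prod_right fun i hi => ?_
      refine (Nat.coprime_primes (hp a (Finset.mem_insert_self a s'))
        (hp i (Finset.mem_insert_of_mem hi))).2 fun h => ?_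
      exact ha (hinj (Finset.mem_insert_self a s') (Finset.mem_insert_of_mem hi) h ▸ hi)
    exact (Nat.squarefree_mul hco).2 ⟨(hp a (Finset.mem_insert_self a s')).prime.squarefree,
      ih (fun i hi => hp i (Finset.mem_insert_of_mem hi))
        (hinj.mono (Finset.subset_insert a s'))⟩

theorem zmod_card_nonnilpotent
    (n : ℕ) (hn : 0 < n) (p k : Fin n → ℕ)
    (hp : ∀ i, (p i).Prime) (hinj : Function.Injective p)
    (hk : ∀ i, 1 ≤ k i) :
    Nat.card {x : ZMod (∏ i, p i ^ k i) //
        x ≠ 0 ∧ ∀ (r : ℤ) (j : ℕ), 1 < j → r ^ j • x = 0 → r • x = 0} =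
      (∏ i, p i) - 1 := by
  classical
  set N := ∏ i, p i ^ k i with hN
  set P := ∏ i, p i with hPdef
  have hP0 : 0 < P := Finset.prod_pos fun i _ => (hp i).pos
  have hN0 : 0 < N := Finset.prod_pos fun i _ => pow_pos (hp i).pos _
  have hPN : P ∣ N := Finset.prod_dvd_prod_of_dvd _ _ fun i _ =>
    dvd_pow_self (p i) (by have := hk i; omega)
  set M := N / P with hMdef
  have hMP : M * P = N := Nat.div_mul_cancel hPN
  have hM0 : 0 < M := Nat.div_pos (Nat.le_of_dvd hN0 hPN) hP0
  haveI : NeZero N := ⟨hN0.ne'⟩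
  have hsqP : Squarefree P :=
    squarefree_prod_primes Finset.univ p (fun i _ => hp i) hinj.injOn
  set K := Finset.univ.sup k with hKdef
  have hK0 : K ≠ 0 := by
    have := Finset.le_sup (f := k) (Finset.mem_univ ⟨0, hn⟩)
    have := hk ⟨0, hn⟩
    omega
  have hNPK : N ∣ P ^ K := by
    rw [hPdef, ← Finset.prod_pow]
    exact Finset.prod_dvd_prod_of_dvd _ _ fun i _ =>
      pow_dvd_pow _ (Finset.le_sup (Finset.mem_univ i))
  -- Lemma A : P • x = 0 ↔ M ∣ x.val
  have lemA : ∀ x : ZMod N, P • x = 0 ↔ M ∣ x.val := by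
    intro x
    have hx : ((x.val : ℕ) : ZMod N) = x := ZMod.natCast_rightInverse x
    have : P • x = ((P * x.val : ℕ) : ZMod N) := by
      conv_lhs => rw [nsmul_eq_mul, ← hx]
      push_cast; ring
    rw [this, ZMod.natCast_eq_zero_iff]
    constructor
    · intro h
      have : P * M ∣ P * x.val := by rw [mul_comm P M, hMP]; exact h
      exact (mul_dvd_mul_iff_left hP0.ne').1 this
    · intro h
      obtain ⟨c, hc⟩ := h
      exact ⟨c, by rw [hc, ← hMP]; ring⟩
  -- key predicate equivalence
  have key : ∀ x : ZMod N,
      (x ≠ 0 ∧ ∀ (r : ℤ) (j : ℕ), 1 < j → r ^ j • x = 0 → r • x = 0) ↔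
        (x ≠ 0 ∧ M ∣ x.val) := by
    intro x
    set d := addOrderOf x with hd
    have hd0 : 0 < d := addOrderOf_pos x
    have hdN : d ∣ N := by
      rw [hd, addOrderOf_dvd_iff_nsmul_eq_zero, nsmul_eq_mul, ZMod.natCast_self, zero_mul]
    constructor
    · rintro ⟨hx0, hcond⟩
      refine ⟨hx0, (lemA x).1 ?_⟩
      rw [← addOrderOf_dvd_iff_nsmul_eq_zero, ← hd]
      have hsqd : Squarefree d := by
        by_contra hns
        obtain ⟨q, hq, hqd⟩ := by
          simpa [Nat.squarefree_iff_prime_squarefree] using hns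
        obtain ⟨m, hm⟩ := hqd
        have hm0 : 0 < m := by
          rcases Nat.eq_zero_or_pos m with h | h
          · rw [h, mul_zero] at hm; omega
          · exact h
        have h2 : ((q * m : ℕ) : ℤ) ^ 2 • x = 0 := by
          rw [← addOrderOf_dvd_iff_zsmul_eq_zero, ← hd]
          refine ⟨(m : ℤ), ?_⟩
          push_cast [hm]; ring
        have h1 := hcond _ 2 one_lt_two h2
        rw [← addOrderOf_dvd_iff_zsmul_eq_zero, ← hd, Int.natCast_dvd_natCast] at h1
        have hle := Nat.le_of_dvd (Nat.mul_pos hq.pos hm0) h1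
        rw [hm] at hle
        nlinarith [hq.two_le]
      exact (hsqd.dvd_pow_iff_dvd hK0).1 (hdN.trans hNPK)
    · rintro ⟨hx0, hMx⟩
      have hdP : d ∣ P := by
        rw [hd, addOrderOf_dvd_iff_nsmul_eq_zero]
        exact (lemA x).2 hMx
      have hsqd : Squarefree (d : ℤ) :=
        Int.squarefree_natCast.2 (hsqP.squarefree_of_dvd hdP)
      refine ⟨hx0, fun r j hj hrj => ?_⟩
      rw [← addOrderOf_dvd_iff_zsmul_eq_zero, ← hd] at hrj ⊢
      exact (hsqd.dvd_pow_iff_dvd (by omega)).1 hrj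
  -- rewrite the card
  rw [Nat.card_congr (Equiv.subtypeEquivRight key)]
  rw [Nat.card_eq_fintype_card, Fintype.card_subtype]
  -- count
  have hBcard : (Finset.univ.filter fun x : ZMod N => M ∣ x.val).card = P := by
    rw [← Finset.card_range P]
    refine Finset.card_bij' (fun x _ => x.val / M) (fun c _ => ((M * c : ℕ) : ZMod N))
      ?_ ?_ ?_ ?_
    · intro x hx
      rw [Finset.mem_range, Nat.div_lt_iff_lt_mul hM0]
      calc x.val < N := ZMod.val_lt x
      _ = P * M := by rw [← hMP, mul_comm]
    · intro c hc
      rw [Finset.mem_range] at hc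
      have hlt : M * c < N := by
        calc M * c < M * P := mul_lt_mul_of_pos_left hc hM0
        _ = N := hMP
      simp only [Finset.mem_filter, Finset.mem_univ, true_and]
      rw [ZMod.val_cast_of_lt hlt]
      exact Dvd.intro c rfl
    · intro x hx
      simp only [Finset.mem_filter, Finset.mem_univ, true_and] at hx
      show ((M * (x.val / M) : ℕ) : ZMod N) = x
      rw [Nat.mul_div_cancel' hx]
      exact ZMod.natCast_rightInverse x
    · intro c hc
      rw [Finset.mem_range] at hc
      have hlt : M * c < N := by
        calc M * c < M * P := mul_lt_mul_of_pos_left hc hM0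
        _ = N := hMP
      show ((M * c : ℕ) : ZMod N).val / M = c
      rw [ZMod.val_cast_of_lt hlt, Nat.mul_div_cancel_left c hM0]
  have h0mem : (0 : ZMod N) ∈ Finset.univ.filter fun x : ZMod N => M ∣ x.val := by
    simp [ZMod.val_zero]
  have herase : (Finset.univ.filter fun x : ZMod N => x ≠ 0 ∧ M ∣ x.val) =
      (Finset.univ.filter fun x : ZMod N => M ∣ x.val).erase 0 := by
    ext x
    simp [Finset.mem_erase, and_comm]
  rw [herase, Finset.card_erase_of_mem h0mem, hBcard]
end

section
/- Let N = p1^{k1} ⋯ pn^{kn} with distinct primes pi, ki ≥ 1. The set N₀ consisting of 0 together with the non-nilpotent elements of the ℤ-module ℤ/Nℤ forms a ℤ-submodule of ℤ/Nℤ, and N₀ is isomorphic as a ℤ-module to ℤ/(p1 ⋯ pn)ℤ. -/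
private theorem aux_zmod_submodule (N q M : ℕ) (hq0 : q ≠ 0) (hM0 : (M : ℤ) ≠ 0)
    (hNMq : (N : ℤ) = M * q)
    (hsq : ∀ (r w : ℤ) (j : ℕ), (q : ℤ) ∣ r ^ j * w → (q : ℤ) ∣ r * w)
    (hpow : ∃ j, 1 < j ∧ (N : ℤ) ∣ (q : ℤ) ^ j) :
    ∃ S : Submodule ℤ (ZMod N),
      (↑S = {x : ZMod N |
          x = 0 ∨ (x ≠ 0 ∧ ∀ (r : ℤ) (j : ℕ), 1 < j → r ^ j • x = 0 → r • x = 0)}) ∧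
      Nonempty (S ≃ₗ[ℤ] ZMod q) := by
  have hN0 : (N : ℤ) ≠ 0 := by
    rw [hNMq]; exact mul_ne_zero hM0 (by exact_mod_cast hq0)
  haveI : NeZero N := ⟨by exact_mod_cast hN0⟩
  -- basic smul characterization
  have hval : ∀ x : ZMod N, (((x.val : ℤ) : ZMod N)) = x := by
    intro x
    rw [Int.cast_natCast, ZMod.natCast_val, ZMod.cast_id]
  have hsmul : ∀ (r : ℤ) (x : ZMod N), r • x = 0 ↔ (N : ℤ) ∣ r * (x.val : ℤ) := by
    intro r x
    rw [← ZMod.intCast_zmod_eq_zero_iff_dvd, Int.cast_mul, hval x, zsmul_eq_mul]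
  -- the linear map from ZMod q
  set g : ℤ →+ ZMod N := zmultiplesHom _ ((M : ZMod N)) with hg
  have hNMqn : N = M * q := by exact_mod_cast hNMq
  have hgq : g (q : ℤ) = 0 := by
    simp only [hg, zmultiplesHom_apply]
    rw [zsmul_eq_mul]
    push_cast
    rw [← Nat.cast_mul, mul_comm q M, ← hNMqn, ZMod.natCast_self]
  set F : ZMod q →ₗ[ℤ] ZMod N := (ZMod.lift q ⟨g, hgq⟩).toIntLinearMap with hF
  have hFcoe : ∀ a : ℤ, F ((a : ZMod q)) = ((a * M : ℤ) : ZMod N) := by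
    intro a
    show (ZMod.lift q ⟨g, hgq⟩) ((a : ZMod q)) = ((a * M : ℤ) : ZMod N)
    rw [ZMod.lift_coe]
    simp only [hg, zmultiplesHom_apply]
    rw [zsmul_eq_mul]
    push_cast
    ring
  -- injectivity
  have hFinj : Function.Injective F := by
    rw [show (⇑F) = ⇑(ZMod.lift q ⟨g, hgq⟩) from rfl, ZMod.lift_injective]
    intro m hm
    simp only [hg, zmultiplesHom_apply] at hm
    have hm' : (((m * M : ℤ)) : ZMod N) = 0 := by
      rw [← hm, zsmul_eq_mul]; push_cast; ring
    rw [ZMod.intCast_zmod_eq_zero_iff_dvd] at hm' ⊢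
    rw [hNMq] at hm'
    have : (q : ℤ) * M ∣ m * M := by rwa [mul_comm] at hm'
    exact (mul_dvd_mul_iff_right hM0).mp this
  refine ⟨LinearMap.range F, ?_, ⟨(LinearEquiv.ofInjective F hFinj).symm⟩⟩
  -- membership characterization: x ∈ range F ↔ q • x = 0
  have hmem : ∀ x : ZMod N, x ∈ LinearMap.range F ↔ (q : ℤ) • x = 0 := by
    intro x
    constructor
    · rintro ⟨c, rfl⟩
      have : (q : ℤ) • F c = F ((q : ℤ) • c) := (map_smul F _ _).symm
      rw [this]
      have hc : (q : ℤ) • c = 0 := by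
        rw [zsmul_eq_mul]
        simp [ZMod.natCast_self]
      rw [hc, map_zero]
    · intro h
      rw [hsmul] at h
      rw [hNMq] at h
      have h' : (M : ℤ) * q ∣ (x.val : ℤ) * q := by rwa [mul_comm (q:ℤ) _] at h
      have hMv : (M : ℤ) ∣ (x.val : ℤ) :=
        (mul_dvd_mul_iff_right (by exact_mod_cast hq0 : (q:ℤ) ≠ 0)).mp h'
      obtain ⟨w, hw⟩ := hMv
      refine ⟨(w : ZMod q), ?_⟩
      rw [hFcoe, ← hval x, hw]
      push_cast
      ring_nf
  ext x
  simp only [SetLike.mem_coe, Set.mem_setOf_eq, hmem]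
  constructor
  · intro hqx
    by_cases hx : x = 0
    · exact Or.inl hx
    · refine Or.inr ⟨hx, fun r j _ hrj => ?_⟩
      rw [hsmul] at hqx hrj ⊢
      rw [hNMq] at hqx hrj ⊢
      have h' : (M : ℤ) * q ∣ (x.val : ℤ) * q := by rwa [mul_comm (q:ℤ) _] at hqx
      obtain ⟨w, hw⟩ := (mul_dvd_mul_iff_right (by exact_mod_cast hq0 : (q:ℤ) ≠ 0)).mp h'
      rw [hw] at hrj ⊢
      have hqd : (q : ℤ) ∣ r ^ j * w := by
        obtain ⟨c, hc⟩ := hrj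
        refine ⟨c, ?_⟩
        have h2 : (M : ℤ) * (r ^ j * w) = (M : ℤ) * ((q : ℤ) * c) := by
          calc (M : ℤ) * (r ^ j * w) = r ^ j * ((M:ℤ) * w) := by ring
            _ = (M : ℤ) * q * c := hc
            _ = (M : ℤ) * ((q:ℤ) * c) := by ring
        exact mul_left_cancel₀ hM0 h2
      have hq1 : (q : ℤ) ∣ r * w := hsq r w j hqd
      obtain ⟨c, hc⟩ := hq1
      exact ⟨c, by rw [show r * ((M:ℤ) * w) = (M:ℤ) * (r * w) by ring, hc]; ring⟩
  · rintro (rfl | ⟨hx, hcond⟩)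
    · simp
    · obtain ⟨j, hj1, hNdvd⟩ := hpow
      apply hcond (q : ℤ) j hj1
      rw [hsmul]
      exact Dvd.dvd.mul_right hNdvd _

theorem zmod_nonnilpotent_with_zero_is_submodule
    (n : ℕ) (hn : 0 < n) (p k : Fin n → ℕ)
    (hp : ∀ i, (p i).Prime) (hinj : Function.Injective p)
    (hk : ∀ i, 1 ≤ k i) :
    ∃ S : Submodule ℤ (ZMod (∏ i, p i ^ k i)),
      (↑S = {x : ZMod (∏ i, p i ^ k i) |
          x = 0 ∨ (x ≠ 0 ∧ ∀ (r : ℤ) (j : ℕ), 1 < j → r ^ j • x = 0 → r • x = 0)}) ∧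
      Nonempty (S ≃ₗ[ℤ] ZMod (∏ i, p i)) := by
  classical
  apply aux_zmod_submodule (∏ i, p i ^ k i) (∏ i, p i) (∏ i, p i ^ (k i - 1))
  · exact Finset.prod_ne_zero_iff.mpr fun i _ => (hp i).pos.ne'
  · exact_mod_cast Finset.prod_ne_zero_iff.mpr fun i _ => pow_ne_zero _ (hp i).pos.ne'
  · push_cast
    rw [← Finset.prod_mul_distrib]
    apply Finset.prod_congr rfl
    intro i _
    rw [← pow_succ]
    congr 1
    have := hk i
    omega
  · intro r w j hdvd
    have hqprod : ((∏ i, p i : ℕ) : ℤ) = ∏ i, ((p i : ℤ)) := by push_cast; rfl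
    rw [hqprod] at hdvd ⊢
    apply Finset.prod_dvd_of_coprime (s := fun i : Fin n => ((p i : ℤ)))
    · intro a _ b _ hab
      have : (p a).Coprime (p b) :=
        (Nat.coprime_primes (hp a) (hp b)).mpr (fun h => hab (hinj h))
      exact Nat.isCoprime_iff_coprime.mpr this
    · intro i _
      have hpi : Prime ((p i : ℤ)) := Nat.prime_iff_prime_int.mp (hp i)
      have hdvd' : ((p i : ℤ)) ∣ r ^ j * w :=
        dvd_trans (Finset.dvd_prod_of_mem (fun i : Fin n => ((p i : ℤ))) (Finset.mem_univ i)) hdvd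
      rcases hpi.dvd_mul.mp hdvd' with h | h
      · exact Dvd.dvd.mul_right (hpi.dvd_of_dvd_pow h) w
      · exact Dvd.dvd.mul_left h r
  · refine ⟨(∑ i, k i) + 2, by omega, ?_⟩
    have : (∏ i, p i ^ k i) ∣ (∏ i, p i) ^ ((∑ i, k i) + 2) := by
      rw [← Finset.prod_pow]
      apply Finset.prod_dvd_prod_of_dvd
      intro i _
      apply pow_dvd_pow
      have := Finset.single_le_sum (f := k) (fun i _ => Nat.zero_le _) (Finset.mem_univ i)
      omega
    exact_mod_cast this
end
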